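/- arXiv:1406.4950 — 3 statements merged into one kernel-verified Lean document; each statement's English description precedes it below -/
import Mathlib

section
/- Let 1 < q < ∞ and let M be an Orlicz function. Then M is equivalent on the segment [0,1] to a q-concave Orlicz function if and only if there exists a constant C > 0 such that C⁻¹·s^q·M(t) ≤ M(st) for all 0 < s < 1 and all 0 < t ≤ 1. -/
open MeasureTheory Set

noncomputable section

/-- An Orlicz function: increasing, convex on `[0,∞)` with `M 0 = 0`. -/
def IsOrliczFunction (M : ℝ → ℝ) : Prop :=
  MonotoneOn M (Ici 0) ∧ ConvexOn ℝ (Ici 0) M ∧ M 0 = 0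

/-- `M` is `r`-concave: `t ↦ M (t ^ (1/r))` is concave on `[0,∞)`. -/
def RConcave (r : ℝ) (M : ℝ → ℝ) : Prop :=
  ConcaveOn ℝ (Ici 0) fun t : ℝ => M (t ^ (1 / r))

/-- Two functions are equivalent on the segment `[0,1]`. -/
def EquivOn01 (M N : ℝ → ℝ) : Prop :=
  ∃ C > (0:ℝ), ∀ t ∈ Icc (0:ℝ) 1, C⁻¹ * M t ≤ N t ∧ N t ≤ C * M t

/-!
Write `M x = φ (x ^ q)` with `φ u = M (u ^ (1 / q))` and put `h u = φ u / u`. The growth condition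
says exactly that `h` is almost decreasing on `(0, 1]`, and convexity of `M` makes
`u ^ (1 - 1 / q) * h u = M (u ^ (1 / q)) / u ^ (1 / q)` increasing. The least decreasing majorant
`ψ` of `h` keeps the second property and exceeds `h` by at most the constant factor, so
`N x = ∫₀^{x^q} ψ` works: `N (t ^ (1 / q)) = ∫₀^t ψ` is concave since `ψ` decreases, `N` is convex
since its derivative `q x ^ (q - 1) ψ (x ^ q)` increases, and `φ t ≤ ∫₀^t ψ ≤ C q φ t` because
`ψ u ≤ C (t / u) ^ (1 - 1 / q) h t` for `u ≤ t`. Conversely, concavity of `N (t ^ (1 / q))` together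
with `N 0 = 0` gives `s ^ q N t ≤ N (s t)`, which transfers to `M`.
-/

theorem convexOn_Ici_of_slope_bounds {a : ℝ} {f m : ℝ → ℝ}
    (hleft : ∀ x y, a ≤ x → x < y → f y - f x ≤ m y * (y - x))
    (hright : ∀ y z, a < y → y < z → m y * (z - y) ≤ f z - f y) :
    ConvexOn ℝ (Ici a) f :=
  convexOn_of_slope_mono_adjacent (convex_Ici a) fun {x y z} hx _ hxy hyz =>
    ((div_le_iff₀ (sub_pos.2 hxy)).2 (hleft x y hx hxy)).trans
      ((le_div_iff₀ (sub_pos.2 hyz)).2 (hright y z (lt_of_le_of_lt hx hxy) hyz))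

theorem concaveOn_Ici_of_slope_bounds {a : ℝ} {f m : ℝ → ℝ}
    (hleft : ∀ x y, a ≤ x → x < y → m y * (y - x) ≤ f y - f x)
    (hright : ∀ y z, a < y → y < z → f z - f y ≤ m y * (z - y)) :
    ConcaveOn ℝ (Ici a) f :=
  concaveOn_of_slope_anti_adjacent (convex_Ici a) fun {x y z} hx _ hxy hyz =>
    ((div_le_iff₀ (sub_pos.2 hyz)).2 (hright y z (lt_of_le_of_lt hx hxy) hyz)).trans
      ((le_div_iff₀ (sub_pos.2 hxy)).2 (hleft x y hx hxy))

section Primitive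

variable {ψ : ℝ → ℝ}

theorem concaveOn_primitive_of_antitoneOn (hint : ∀ b, 0 ≤ b → IntervalIntegrable ψ volume 0 b)
    (hanti : AntitoneOn ψ (Ioi 0)) :
    ConcaveOn ℝ (Ici 0) fun t => ∫ u in (0:ℝ)..t, ψ u := by
  refine concaveOn_Ici_of_slope_bounds (m := ψ) (fun x y hx hxy => ?_) fun y z hy hyz => ?_
  · have hy := hx.trans hxy.le
    rw [intervalIntegral.integral_interval_sub_left (hint y hy) (hint x hx),
      show ψ y * (y - x) = ∫ _ in x..y, ψ y by simp [mul_comm]]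
    exact intervalIntegral.integral_mono_on_of_le_Ioo hxy.le intervalIntegrable_const
      ((hint _ hx).symm.trans (hint _ hy))
      fun u hu => hanti (hx.trans_lt hu.1) (hx.trans_lt hxy) hu.2.le
  · have hz := hy.le.trans hyz.le
    rw [intervalIntegral.integral_interval_sub_left (hint z hz) (hint y hy.le),
      show ψ y * (z - y) = ∫ _ in y..z, ψ y by simp [mul_comm]]
    exact intervalIntegral.integral_mono_on_of_le_Ioo hyz.le
      ((hint _ hy.le).symm.trans (hint _ hz)) intervalIntegrable_const
      fun u hu => hanti hy (hy.trans hu.1) hu.1.le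

theorem integral_rpow_one_div_sub_one {q a b : ℝ} (hq : 0 < q) (ha : 0 ≤ a) (hb : 0 ≤ b) :
    ∫ u in a ^ q..b ^ q, u ^ (1 / q - 1) = q * (b - a) := by
  rw [integral_rpow (Or.inl (by linarith [one_div_pos.2 hq])), sub_add_cancel,
    ← Real.rpow_mul ha, ← Real.rpow_mul hb, mul_one_div_cancel hq.ne', Real.rpow_one,
    Real.rpow_one]
  field_simp

theorem rpow_mul_rpow_mul_cancel {u : ℝ} (hu : 0 < u) (q c : ℝ) :
    u ^ (1 / q - 1) * (u ^ (1 - 1 / q) * c) = c := by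
  rw [← mul_assoc, ← Real.rpow_add hu]
  norm_num

theorem convexOn_primitive_comp_rpow {q : ℝ} (hq : 0 < q)
    (hint : ∀ b, 0 ≤ b → IntervalIntegrable ψ volume 0 b)
    (hmono : MonotoneOn (fun u => u ^ (1 - 1 / q) * ψ u) (Ioi 0)) :
    ConvexOn ℝ (Ici 0) fun x => ∫ u in (0:ℝ)..x ^ q, ψ u := by
  set χ := fun u => u ^ (1 - 1 / q) * ψ u
  have hweight (c a b : ℝ) : IntervalIntegrable (fun u => c * u ^ (1 / q - 1)) volume a b :=
    ((intervalIntegral.intervalIntegrable_rpow' (by linarith [one_div_pos.2 hq])).const_mul _)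
  refine convexOn_Ici_of_slope_bounds (m := fun y => χ (y ^ q) * q)
    (fun x y hx hxy => ?_) fun y z hy hyz => ?_
  · have hxq := Real.rpow_nonneg hx q
    have hyq := Real.rpow_nonneg (hx.trans hxy.le) q
    have hxyq : x ^ q < y ^ q := Real.rpow_lt_rpow hx hxy hq
    rw [intervalIntegral.integral_interval_sub_left (hint _ hyq) (hint _ hxq), mul_assoc,
      ← integral_rpow_one_div_sub_one hq hx (hx.trans hxy.le), ← intervalIntegral.integral_const_mul]
    refine intervalIntegral.integral_mono_on_of_le_Ioo hxyq.le
      ((hint _ hxq).symm.trans (hint _ hyq)) (hweight _ _ _) fun u hu => ?_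
    have hu0 : 0 < u := hxq.trans_lt hu.1
    calc ψ u = u ^ (1 / q - 1) * χ u := (rpow_mul_rpow_mul_cancel hu0 q _).symm
      _ ≤ u ^ (1 / q - 1) * χ (y ^ q) := by
          gcongr
          exact hmono hu0 (hu0.trans hu.2) hu.2.le
      _ = _ := mul_comm _ _
  · have hyq := Real.rpow_nonneg hy.le q
    have hzq := Real.rpow_nonneg (hy.le.trans hyz.le) q
    have hyzq : y ^ q < z ^ q := Real.rpow_lt_rpow hy.le hyz hq
    rw [intervalIntegral.integral_interval_sub_left (hint _ hzq) (hint _ hyq), mul_assoc,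
      ← integral_rpow_one_div_sub_one hq hy.le (hy.le.trans hyz.le),
      ← intervalIntegral.integral_const_mul]
    refine intervalIntegral.integral_mono_on_of_le_Ioo hyzq.le (hweight _ _ _)
      ((hint _ hyq).symm.trans (hint _ hzq)) fun u hu => ?_
    have hu0 : 0 < u := hyq.trans_lt hu.1
    calc χ (y ^ q) * u ^ (1 / q - 1) = u ^ (1 / q - 1) * χ (y ^ q) := mul_comm _ _
      _ ≤ u ^ (1 / q - 1) * χ u := by
          gcongr
          exact hmono (Real.rpow_pos_of_pos hy q) hu0 hu.1.le
      _ = ψ u := rpow_mul_rpow_mul_cancel hu0 q _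

end Primitive

def AlmostAntitoneOn (C : ℝ) (h : ℝ → ℝ) (s : Set ℝ) : Prop :=
  ∀ ⦃v⦄, v ∈ s → ∀ ⦃w⦄, w ∈ s → v ≤ w → h w ≤ C * h v

def antitoneMajorant (h : ℝ → ℝ) (u : ℝ) : ℝ :=
  sSup (h '' Icc (min u 1) 1)

section AntitoneMajorant

variable {h : ℝ → ℝ} {C p u t : ℝ}

theorem antitoneMajorant_of_le_one (hu : u ≤ 1) :
    antitoneMajorant h u = sSup (h '' Icc u 1) := by
  rw [antitoneMajorant, min_eq_left hu]

theorem antitoneMajorant_of_one_le (hu : 1 ≤ u) : antitoneMajorant h u = h 1 := by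
  rw [antitoneMajorant, min_eq_right hu, Icc_self, image_singleton, csSup_singleton]

theorem antitoneMajorant_nonneg (hh : ∀ v, 0 ≤ v → 0 ≤ h v) (hu : 0 ≤ u) :
    0 ≤ antitoneMajorant h u :=
  Real.sSup_nonneg <| by
    rintro _ ⟨w, hw, rfl⟩
    exact hh w ((le_min hu zero_le_one).trans hw.1)

theorem AlmostAntitoneOn.bddAbove_image_Icc (hdec : AlmostAntitoneOn C h (Ioc 0 1)) {v : ℝ}
    (hv : v ∈ Ioc 0 1) : BddAbove (h '' Icc v 1) :=
  ⟨C * h v, by rintro _ ⟨w, hw, rfl⟩; exact hdec hv ⟨hv.1.trans_le hw.1, hw.2⟩ hw.1⟩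

theorem AlmostAntitoneOn.le_antitoneMajorant (hdec : AlmostAntitoneOn C h (Ioc 0 1))
    (hu : u ∈ Ioc 0 1) : h u ≤ antitoneMajorant h u := by
  rw [antitoneMajorant_of_le_one hu.2]
  exact le_csSup (hdec.bddAbove_image_Icc hu) ⟨u, ⟨le_rfl, hu.2⟩, rfl⟩

theorem AlmostAntitoneOn.antitoneMajorant_le (hdec : AlmostAntitoneOn C h (Ioc 0 1))
    (hu : u ∈ Ioc 0 1) : antitoneMajorant h u ≤ C * h u := by
  rw [antitoneMajorant_of_le_one hu.2]
  exact csSup_le ⟨h u, u, ⟨le_rfl, hu.2⟩, rfl⟩ fun _ ⟨w, hw, hhw⟩ =>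
    hhw ▸ hdec hu ⟨hu.1.trans_le hw.1, hw.2⟩ hw.1

theorem AlmostAntitoneOn.antitoneOn_antitoneMajorant (hdec : AlmostAntitoneOn C h (Ioc 0 1)) :
    AntitoneOn (antitoneMajorant h) (Ioi 0) := by
  intro u hu u' _ huu'
  exact csSup_le_csSup (hdec.bddAbove_image_Icc ⟨lt_min hu one_pos, min_le_right _ _⟩)
    ⟨h 1, 1, ⟨min_le_right _ _, le_rfl⟩, rfl⟩
    (image_mono (Icc_subset_Icc_left (min_le_min_right 1 huu')))

theorem AlmostAntitoneOn.monotoneOn_rpow_mul_antitoneMajorant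
    (hdec : AlmostAntitoneOn C h (Ioc 0 1)) (hh : ∀ v, 0 ≤ v → 0 ≤ h v) (hp : 0 ≤ p)
    (hmono : MonotoneOn (fun v => v ^ p * h v) (Ioc 0 1)) :
    MonotoneOn (fun u => u ^ p * antitoneMajorant h u) (Ioi 0) := by
  have hunit : MonotoneOn (fun u => u ^ p * antitoneMajorant h u) (Ioc 0 1) := by
    intro u hu u' hu' huu'
    have hpos : 0 < u ^ p := Real.rpow_pos_of_pos hu.1 p
    show u ^ p * antitoneMajorant h u ≤ u' ^ p * antitoneMajorant h u'
    rw [← le_div_iff₀' hpos, antitoneMajorant_of_le_one hu.2]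
    refine csSup_le ⟨h u, u, ⟨le_rfl, hu.2⟩, rfl⟩ fun _ ⟨w, hw, hhw⟩ => ?_
    rw [← hhw, le_div_iff₀' hpos]
    have hw0 : 0 < w := hu.1.trans_le hw.1
    rcases le_total u' w with hu'w | hwu'
    · calc u ^ p * h w ≤ u' ^ p * h w :=
            mul_le_mul_of_nonneg_right (Real.rpow_le_rpow hu.1.le huu' hp) (hh w hw0.le)
        _ ≤ u' ^ p * antitoneMajorant h u' := by
            refine mul_le_mul_of_nonneg_left ?_ (Real.rpow_nonneg hu'.1.le p)
            rw [antitoneMajorant_of_le_one hu'.2]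
            exact le_csSup (hdec.bddAbove_image_Icc hu') ⟨w, ⟨hu'w, hw.2⟩, rfl⟩
    · calc u ^ p * h w ≤ w ^ p * h w :=
            mul_le_mul_of_nonneg_right (Real.rpow_le_rpow hu.1.le hw.1 hp) (hh w hw0.le)
        _ ≤ u' ^ p * h u' := hmono ⟨hw0, hw.2⟩ hu' hwu'
        _ ≤ u' ^ p * antitoneMajorant h u' :=
            mul_le_mul_of_nonneg_left (hdec.le_antitoneMajorant hu') (Real.rpow_nonneg hu'.1.le p)
  have hone : MonotoneOn (fun u => u ^ p * antitoneMajorant h u) (Ici 1) := by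
    intro u hu u' hu' huu'
    simp only [antitoneMajorant_of_one_le hu, antitoneMajorant_of_one_le hu']
    gcongr
    · exact hh 1 zero_le_one
    · exact zero_le_one.trans hu
  rw [← Ioc_union_Ici_eq_Ioi zero_lt_one]
  exact hunit.union_right hone ⟨⟨one_pos, le_rfl⟩, fun _ hx => hx.2⟩ isLeast_Ici

theorem AlmostAntitoneOn.antitoneMajorant_le_rpow (hdec : AlmostAntitoneOn C h (Ioc 0 1))
    (hC : 0 ≤ C) (hmono : MonotoneOn (fun v => v ^ p * h v) (Ioc 0 1)) (hu : 0 < u)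
    (hut : u ≤ t) (ht : t ≤ 1) :
    antitoneMajorant h u ≤ C * (t ^ p * h t) * u ^ (-p) := by
  calc antitoneMajorant h u ≤ C * h u := hdec.antitoneMajorant_le ⟨hu, hut.trans ht⟩
    _ = C * (u ^ p * h u) * u ^ (-p) := by
        rw [Real.rpow_neg hu.le]; field_simp
    _ ≤ C * (t ^ p * h t) * u ^ (-p) := by
        refine mul_le_mul_of_nonneg_right (mul_le_mul_of_nonneg_left ?_ hC) (by positivity)
        exact hmono ⟨hu, hut.trans ht⟩ ⟨hu.trans_le hut, ht⟩ hut

theorem AlmostAntitoneOn.intervalIntegrable_antitoneMajorant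
    (hdec : AlmostAntitoneOn C h (Ioc 0 1)) (hC : 0 ≤ C) (hh : ∀ v, 0 ≤ v → 0 ≤ h v)
    (hmono : MonotoneOn (fun v => v ^ p * h v) (Ioc 0 1)) (hp : p < 1) (b : ℝ) (hb : 0 ≤ b) :
    IntervalIntegrable (antitoneMajorant h) volume 0 b := by
  have hdom : IntervalIntegrable (fun u => C * h 1 * u ^ (-p) + h 1) volume 0 b :=
    ((intervalIntegral.intervalIntegrable_rpow' (by linarith)).const_mul _).add
      intervalIntegrable_const
  refine hdom.mono_fun' ?_ ?_
  · rw [uIoc_of_le hb]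
    exact (aemeasurable_restrict_of_antitoneOn measurableSet_Ioc
      (hdec.antitoneOn_antitoneMajorant.mono fun _ hu => hu.1)).aestronglyMeasurable
  · rw [uIoc_of_le hb, Filter.EventuallyLE, ae_restrict_iff' measurableSet_Ioc]
    refine Filter.Eventually.of_forall fun u hu => ?_
    have hh1 := hh 1 zero_le_one
    have hdom_nonneg : 0 ≤ C * h 1 * u ^ (-p) := by
      have := Real.rpow_nonneg hu.1.le (-p)
      positivity
    rw [Real.norm_of_nonneg (antitoneMajorant_nonneg hh hu.1.le)]
    rcases le_total u 1 with hu1 | hu1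
    · have := hdec.antitoneMajorant_le_rpow hC hmono hu.1 hu1 le_rfl
      rw [Real.one_rpow, one_mul] at this
      linarith
    · rw [antitoneMajorant_of_one_le hu1]
      linarith

theorem AlmostAntitoneOn.mul_le_integral_antitoneMajorant (hdec : AlmostAntitoneOn C h (Ioc 0 1))
    (hint : IntervalIntegrable (antitoneMajorant h) volume 0 t) (ht : t ∈ Ioc 0 1) :
    t * h t ≤ ∫ u in (0:ℝ)..t, antitoneMajorant h u :=
  calc t * h t ≤ t * antitoneMajorant h t :=
        mul_le_mul_of_nonneg_left (hdec.le_antitoneMajorant ht) ht.1.le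
    _ = ∫ _ in (0:ℝ)..t, antitoneMajorant h t := by simp
    _ ≤ ∫ u in (0:ℝ)..t, antitoneMajorant h u :=
        intervalIntegral.integral_mono_on_of_le_Ioo ht.1.le intervalIntegrable_const hint
          fun u hu => hdec.antitoneOn_antitoneMajorant hu.1 ht.1 hu.2.le

theorem AlmostAntitoneOn.integral_antitoneMajorant_le (hdec : AlmostAntitoneOn C h (Ioc 0 1))
    (hC : 0 ≤ C) (hmono : MonotoneOn (fun v => v ^ p * h v) (Ioc 0 1)) (hp : p < 1)
    (hint : IntervalIntegrable (antitoneMajorant h) volume 0 t) (ht : t ∈ Ioc 0 1) :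
    ∫ u in (0:ℝ)..t, antitoneMajorant h u ≤ C / (1 - p) * (t * h t) :=
  calc ∫ u in (0:ℝ)..t, antitoneMajorant h u ≤ ∫ u in (0:ℝ)..t, C * (t ^ p * h t) * u ^ (-p) :=
        intervalIntegral.integral_mono_on_of_le_Ioo ht.1.le hint
          ((intervalIntegral.intervalIntegrable_rpow' (by linarith)).const_mul _)
          fun u hu => hdec.antitoneMajorant_le_rpow hC hmono hu.1 hu.2.le ht.2
    _ = C / (1 - p) * (t * h t) := by
        have h1p : 1 - p ≠ 0 := by linarith
        rw [intervalIntegral.integral_const_mul, integral_rpow (Or.inl (by linarith)),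
          neg_add_eq_sub, Real.zero_rpow h1p, sub_zero]
        have : t ^ p * t ^ (1 - p) = t := by
          rw [← Real.rpow_add ht.1]; simp
        field_simp
        linear_combination C * h t * this

end AntitoneMajorant

section Orlicz

variable {M : ℝ → ℝ} {q C : ℝ}

theorem IsOrliczFunction.nonneg (hM : IsOrliczFunction M) {x : ℝ} (hx : 0 ≤ x) : 0 ≤ M x :=
  hM.2.2 ▸ hM.1 self_mem_Ici hx hx

theorem IsOrliczFunction.monotoneOn_div (hM : IsOrliczFunction M) :
    MonotoneOn (fun x => M x / x) (Ioi 0) := fun x hx y hy hxy => by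
  simpa [hM.2.2] using
    hM.2.1.secant_mono self_mem_Ici (mem_Ici.2 hx.le) (mem_Ici.2 hy.le) hx.ne' hy.ne' hxy

theorem IsOrliczFunction.rpow_div_nonneg (hM : IsOrliczFunction M) {v : ℝ} (hv : 0 ≤ v) :
    0 ≤ M (v ^ (1 / q)) / v :=
  div_nonneg (hM.nonneg (Real.rpow_nonneg hv _)) hv

theorem IsOrliczFunction.monotoneOn_rpow_mul_rpow_div (hM : IsOrliczFunction M) (hq : 0 < q) :
    MonotoneOn (fun v => v ^ (1 - 1 / q) * (M (v ^ (1 / q)) / v)) (Ioi 0) := by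
  have key {v : ℝ} (hv : 0 < v) :
      v ^ (1 - 1 / q) * (M (v ^ (1 / q)) / v) = M (v ^ (1 / q)) / v ^ (1 / q) := by
    rw [Real.rpow_sub hv, Real.rpow_one]
    have := Real.rpow_pos_of_pos hv (1 / q)
    field_simp
  intro v hv w hw hvw
  simp only [key hv, key hw]
  exact hM.monotoneOn_div (Real.rpow_pos_of_pos hv _) (Real.rpow_pos_of_pos hw _)
    (Real.rpow_le_rpow hv.le hvw (by positivity))

theorem IsOrliczFunction.almostAntitoneOn_rpow_div (hM : IsOrliczFunction M) (hq : 0 < q)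
    (hC : 0 < C)
    (hlow : ∀ s t : ℝ, 0 < s → s < 1 → 0 < t → t ≤ 1 → C⁻¹ * s ^ q * M t ≤ M (s * t)) :
    AlmostAntitoneOn (max C 1) (fun v => M (v ^ (1 / q)) / v) (Ioc 0 1) := by
  rintro v ⟨hv0, -⟩ w ⟨-, hw1⟩ hvw
  have hnonneg := hM.rpow_div_nonneg (q := q) hv0.le
  rcases hvw.eq_or_lt with rfl | hlt
  · exact le_mul_of_one_le_left hnonneg (le_max_right C 1)
  have hw0 : 0 < w := hv0.trans hlt
  have hvw1 : v / w < 1 := (div_lt_one hw0).2 hlt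
  have key := hlow ((v / w) ^ (1 / q)) (w ^ (1 / q)) (Real.rpow_pos_of_pos (by positivity) _)
    (Real.rpow_lt_one (by positivity) hvw1 (by positivity)) (Real.rpow_pos_of_pos hw0 _)
    (Real.rpow_le_one hw0.le hw1 (by positivity))
  rw [← Real.rpow_mul (by positivity), one_div_mul_cancel hq.ne', Real.rpow_one,
    ← Real.mul_rpow (by positivity) hw0.le, div_mul_cancel₀ _ hw0.ne'] at key
  calc M (w ^ (1 / q)) / w = C * (C⁻¹ * (v / w) * M (w ^ (1 / q))) / v := by
        field_simp
    _ ≤ C * M (v ^ (1 / q)) / v := by gcongr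
    _ ≤ max C 1 * (M (v ^ (1 / q)) / v) := by
        rw [mul_div_assoc]
        exact mul_le_mul_of_nonneg_right (le_max_left C 1) hnonneg

end Orlicz

def qConcaveRegularization (q : ℝ) (M : ℝ → ℝ) (x : ℝ) : ℝ :=
  ∫ u in (0:ℝ)..x ^ q, antitoneMajorant (fun v => M (v ^ (1 / q)) / v) u

section Regularization

variable {M : ℝ → ℝ} {q K : ℝ}

theorem IsOrliczFunction.intervalIntegrable_antitoneMajorant (hM : IsOrliczFunction M)
    (hq : 0 < q) (hK : 0 ≤ K) (hdec : AlmostAntitoneOn K (fun v => M (v ^ (1 / q)) / v) (Ioc 0 1))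
    (b : ℝ) (hb : 0 ≤ b) :
    IntervalIntegrable (antitoneMajorant fun v => M (v ^ (1 / q)) / v) volume 0 b :=
  hdec.intervalIntegrable_antitoneMajorant hK (fun _ => hM.rpow_div_nonneg)
    ((hM.monotoneOn_rpow_mul_rpow_div hq).mono Ioc_subset_Ioi_self)
    (by linarith [one_div_pos.2 hq]) b hb

theorem IsOrliczFunction.isOrliczFunction_qConcaveRegularization (hM : IsOrliczFunction M)
    (hq : 1 ≤ q) (hK : 0 ≤ K)
    (hdec : AlmostAntitoneOn K (fun v => M (v ^ (1 / q)) / v) (Ioc 0 1)) :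
    IsOrliczFunction (qConcaveRegularization q M) := by
  have hq0 : 0 < q := zero_lt_one.trans_le hq
  have hint := hM.intervalIntegrable_antitoneMajorant hq0 hK hdec
  refine ⟨fun x hx y hy hxy => ?_, ?_, ?_⟩
  · have hyq := Real.rpow_nonneg (mem_Ici.1 hy) q
    exact intervalIntegral.integral_mono_interval le_rfl (Real.rpow_nonneg hx q)
      (Real.rpow_le_rpow hx hxy hq0.le)
      (ae_restrict_of_forall_mem measurableSet_Ioc fun u hu =>
        antitoneMajorant_nonneg (fun _ => hM.rpow_div_nonneg) hu.1.le)
      (hint _ hyq)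
  · refine convexOn_primitive_comp_rpow hq0 hint ?_
    exact hdec.monotoneOn_rpow_mul_antitoneMajorant (fun _ => hM.rpow_div_nonneg)
      (sub_nonneg.2 (div_le_one_of_le₀ hq hq0.le))
      ((hM.monotoneOn_rpow_mul_rpow_div hq0).mono Ioc_subset_Ioi_self)
  · simp [qConcaveRegularization, Real.zero_rpow hq0.ne']

theorem IsOrliczFunction.rConcave_qConcaveRegularization (hM : IsOrliczFunction M)
    (hq : 0 < q) (hK : 0 ≤ K)
    (hdec : AlmostAntitoneOn K (fun v => M (v ^ (1 / q)) / v) (Ioc 0 1)) :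
    RConcave q (qConcaveRegularization q M) := by
  refine (concaveOn_primitive_of_antitoneOn (hM.intervalIntegrable_antitoneMajorant hq hK hdec)
    hdec.antitoneOn_antitoneMajorant).congr fun t ht => ?_
  simp only [qConcaveRegularization]
  rw [← Real.rpow_mul ht, one_div_mul_cancel hq.ne', Real.rpow_one]

theorem IsOrliczFunction.qConcaveRegularization_mem_Icc (hM : IsOrliczFunction M)
    (hq : 0 < q) (hK : 0 ≤ K)
    (hdec : AlmostAntitoneOn K (fun v => M (v ^ (1 / q)) / v) (Ioc 0 1)) {x : ℝ}
    (hx : x ∈ Ioc 0 1) :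
    qConcaveRegularization q M x ∈ Icc (M x) (K * q * M x) := by
  have hxq : x ^ q ∈ Ioc 0 1 :=
    ⟨Real.rpow_pos_of_pos hx.1 q, Real.rpow_le_one hx.1.le hx.2 hq.le⟩
  have hMx : x ^ q * (M ((x ^ q) ^ (1 / q)) / x ^ q) = M x := by
    rw [← Real.rpow_mul hx.1.le, mul_one_div_cancel hq.ne', Real.rpow_one,
      mul_div_cancel₀ _ hxq.1.ne']
  have hint := hM.intervalIntegrable_antitoneMajorant hq hK hdec _ hxq.1.le
  constructor
  · exact hMx ▸ hdec.mul_le_integral_antitoneMajorant hint hxq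
  · have := hdec.integral_antitoneMajorant_le hK
      ((hM.monotoneOn_rpow_mul_rpow_div hq).mono Ioc_subset_Ioi_self)
      (by linarith [one_div_pos.2 hq]) hint hxq
    rwa [hMx, sub_sub_cancel, div_div_eq_mul_div, div_one] at this

end Regularization

theorem equivOn01_of_mem_Icc {M N : ℝ → ℝ} {K : ℝ} (hK : 0 ≤ K) (hM0 : M 0 = 0)
    (hN0 : N 0 = 0) (hM : ∀ t ∈ Ioc (0:ℝ) 1, 0 ≤ M t)
    (hle : ∀ t ∈ Ioc (0:ℝ) 1, N t ∈ Icc (M t) (K * M t)) :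
    EquivOn01 M N := by
  refine ⟨K + 1, by positivity, fun t ht => ?_⟩
  rcases ht.1.eq_or_lt with rfl | ht0
  · simp [hM0, hN0]
  obtain ⟨hMN, hNM⟩ := hle t ⟨ht0, ht.2⟩
  have hMt := hM t ⟨ht0, ht.2⟩
  constructor
  · calc (K + 1)⁻¹ * M t ≤ 1 * M t :=
          mul_le_mul_of_nonneg_right (inv_le_one_of_one_le₀ (by linarith)) hMt
      _ ≤ N t := by linarith
  · nlinarith

theorem RConcave.rpow_mul_le {q : ℝ} {N : ℝ → ℝ} (hN : RConcave q N) (hq : 0 < q)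
    (hN0 : N 0 = 0) {s t : ℝ} (hs : 0 ≤ s) (hs1 : s ≤ 1) (ht : 0 ≤ t) :
    s ^ q * N t ≤ N (s * t) := by
  have hinv {x : ℝ} (hx : 0 ≤ x) : (x ^ q) ^ (1 / q) = x := by
    rw [← Real.rpow_mul hx, mul_one_div_cancel hq.ne', Real.rpow_one]
  have key := hN.2 (mem_Ici.2 (Real.rpow_nonneg ht q)) self_mem_Ici (Real.rpow_nonneg hs q)
    (sub_nonneg.2 (Real.rpow_le_one hs hs1 hq.le)) (add_sub_cancel _ _)
  simp only [smul_eq_mul, mul_zero, add_zero] at key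
  rwa [← Real.mul_rpow hs ht, hinv ht, hinv (mul_nonneg hs ht),
    Real.zero_rpow (one_div_pos.2 hq).ne', hN0, mul_zero, add_zero] at key

theorem EquivOn01.exists_rpow_mul_le {q : ℝ} {M N : ℝ → ℝ} (hMN : EquivOn01 M N) (hq : 0 < q)
    (hNq : RConcave q N) (hN0 : N 0 = 0) :
    ∃ C > (0:ℝ), ∀ s t : ℝ, 0 < s → s < 1 → 0 < t → t ≤ 1 → C⁻¹ * s ^ q * M t ≤ M (s * t) := by
  obtain ⟨C, hC, hequiv⟩ := hMN
  refine ⟨C * C, by positivity, fun s t hs hs1 ht ht1 => ?_⟩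
  have hst : s * t ∈ Icc (0:ℝ) 1 := ⟨by positivity, by nlinarith⟩
  calc (C * C)⁻¹ * s ^ q * M t = C⁻¹ * (s ^ q * (C⁻¹ * M t)) := by rw [mul_inv]; ring
    _ ≤ C⁻¹ * (s ^ q * N t) := by gcongr; exact (hequiv t ⟨ht.le, ht1⟩).1
    _ ≤ C⁻¹ * N (s * t) := by gcongr; exact hNq.rpow_mul_le hq hN0 hs.le hs1.le ht.le
    _ ≤ M (s * t) := by rw [inv_mul_le_iff₀ hC]; exact (hequiv _ hst).2

theorem equivalent_to_q_concave_iff_general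
    (q : ℝ) (hq : 1 < q)
    (M : ℝ → ℝ) (hM : IsOrliczFunction M) :
    (∃ N : ℝ → ℝ, IsOrliczFunction N ∧ RConcave q N ∧ EquivOn01 M N) ↔
      (∃ C > (0:ℝ), ∀ s t : ℝ, 0 < s → s < 1 → 0 < t → t ≤ 1 →
        C⁻¹ * s ^ q * M t ≤ M (s * t)) := by
  have hq0 : 0 < q := zero_lt_one.trans hq
  refine ⟨fun ⟨N, hN, hNq, hMN⟩ => hMN.exists_rpow_mul_le hq0 hNq hN.2.2, ?_⟩
  rintro ⟨C, hC, hlow⟩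
  have hdec := hM.almostAntitoneOn_rpow_div hq0 hC hlow
  have hK : 0 ≤ max C 1 := hC.le.trans (le_max_left C 1)
  have hN := hM.isOrliczFunction_qConcaveRegularization hq.le hK hdec
  refine ⟨qConcaveRegularization q M, hN, hM.rConcave_qConcaveRegularization hq0 hK hdec, ?_⟩
  exact equivOn01_of_mem_Icc (by positivity) hM.2.2 hN.2.2 (fun t ht => hM.nonneg ht.1.le)
    fun t ht => hM.qConcaveRegularization_mem_Icc hq0 hK hdec ht

/-- An Orlicz function `M` is equivalent on `[0,1]` to a `q`-concave Orlicz function iff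
`C⁻¹ s^q M(t) ≤ M(st)` for all `0 < s < 1`, `0 < t ≤ 1`. -/
theorem equivalent_to_q_concave_iff
    (q : ℝ) (hq : 1 < q)
    (M : ℝ → ℝ) (hM : IsOrliczFunction M) (hM1 : M 1 = 1)
    (hMbij : Set.BijOn M (Ici 0) (Ici 0)) :
    (∃ N : ℝ → ℝ, IsOrliczFunction N ∧ RConcave q N ∧ EquivOn01 M N) ↔
      (∃ C > (0:ℝ), ∀ s t : ℝ, 0 < s → s < 1 → 0 < t → t ≤ 1 →
        C⁻¹ * s ^ q * M t ≤ M (s * t)) :=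
  equivalent_to_q_concave_iff_general q hq M hM
end
end

section
/- Let (h_k) be a sequence of pairwise disjoint measurable subsets of (0,1) with λ(h_k) = 2^{−k−2^k} for k ≥ 1, and let x = ∑_{k≥1} 2^{2^k} χ_{h_k}. Then for every 0 < t < 1/4: 1/log₂(1/t) ≤ ∫₀¹ min{x(s), t·x(s)²} ds ≤ 6/log₂(1/t). -/
open MeasureTheory Set

noncomputable section

/-!
On `h (j+1)` the function `x` takes the value `A = 2^{2^{j+1}}`, and `A · λ(h (j+1)) = 2^{-(j+1)}`,
so the integral equals `∑_j 2^{-(j+1)} min(1, t 2^{2^{j+1}})`. Choose `N` with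
`2^N ≤ log₂(1/t) < 2^{N+1}`. The terms with `j ≥ N` have `t 2^{2^{j+1}} ≥ 1` and sum to `2^{-N}`;
the terms with `j < N` are at most `2^{j+1} / 4^N` and sum to at most `2 · 2^{-N}`.
Hence the integral lies between `2^{-N}` and `3 · 2^{-N}`, which in turn lie between
`1 / log₂(1/t)` and `6 / log₂(1/t)`.
-/

open Real Finset Function
open scoped ENNReal

lemma tsum_mul_indicator_one_of_mem {α ι R : Type*} [NonAssocSemiring R] [TopologicalSpace R]
    {s : ι → Set α} (hd : Pairwise (Disjoint on s)) (c : ι → R) {a : α} {i : ι} (ha : a ∈ s i) :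
    ∑' j, c j * (s j).indicator (fun _ => 1) a = c i := by
  rw [tsum_eq_single i fun j hj => by
      rw [indicator_of_notMem (disjoint_right.mp (hd hj) ha), mul_zero],
    indicator_of_mem ha, mul_one]

section PiecewiseConstant

variable {α ι : Type*} [MeasurableSpace α] [Countable ι] {μ : Measure α} {s : ι → Set α}

lemma hasSum_integral_of_eqOn_const {f : α → ℝ} {c : ι → ℝ} (hs : ∀ i, MeasurableSet (s i))
    (hd : Pairwise (Disjoint on s)) (hfin : ∀ i, μ (s i) ≠ ∞)
    (hf : ∀ i, EqOn f (fun _ => c i) (s i)) (hf0 : ∀ a ∉ ⋃ i, s i, f a = 0)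
    (hsum : Summable fun i => ‖c i‖ * μ.real (s i)) :
    HasSum (fun i => c i * μ.real (s i)) (∫ a, f a ∂μ) := by
  have hint : ∀ i, ∫ a in s i, f a ∂μ = c i * μ.real (s i) := fun i => by
    rw [setIntegral_congr_fun (hs i) (hf i), setIntegral_const, smul_eq_mul, mul_comm]
  have hnorm : ∀ i, ∫ a in s i, ‖f a‖ ∂μ = ‖c i‖ * μ.real (s i) := fun i => by
    rw [setIntegral_congr_fun (hs i) fun a ha => congrArg norm (hf i ha), setIntegral_const,
      smul_eq_mul, mul_comm]
  have hfi : ∀ i, IntegrableOn f (s i) μ := fun i =>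
    (integrableOn_const (hfin i)).congr_fun (fun a ha => (hf i ha).symm) (hs i)
  rw [← setIntegral_eq_integral_of_forall_compl_eq_zero hf0]
  simpa only [hint] using hasSum_integral_iUnion hs hd
    (integrableOn_iUnion_of_summable_integral_norm hfi (by simpa only [hnorm] using hsum))

end PiecewiseConstant

lemma two_pow_succ_add_two_mul_le {j N : ℕ} (hj : j < N) :
    2 ^ (j + 1) + 2 * N ≤ 2 ^ N + 2 * j + 2 := by
  induction N, hj using Nat.le_induction with
  | base => omega
  | succ N hN ih =>
    have : 2 ≤ 2 ^ N := Nat.le_self_pow (by omega) 2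
    rw [pow_succ]
    omega

lemma two_pow_le_logb_one_div_iff {t : ℝ} (ht : 0 < t) (n : ℕ) :
    (2 : ℝ) ^ n ≤ logb 2 (1 / t) ↔ t * 2 ^ 2 ^ n ≤ 1 := by
  rw [le_logb_iff_rpow_le one_lt_two (by positivity), le_div_iff₀ ht, mul_comm]
  norm_cast

/-- The contribution `λ(h_{j+1}) · min (A, t A²)` of `h_{j+1}`, where `A = 2^{2^{j+1}}`. -/
def sharpnessTerm (t : ℝ) (j : ℕ) : ℝ := ((2 : ℝ) ^ (j + 1))⁻¹ * min 1 (t * 2 ^ 2 ^ (j + 1))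

section SharpnessTerm

variable {t : ℝ} {N : ℕ}

lemma hasSum_inv_two_pow_add_succ (N : ℕ) :
    HasSum (fun n : ℕ => ((2 : ℝ) ^ (n + N + 1))⁻¹) (2 ^ N)⁻¹ := by
  convert hasSum_geometric_two' ((2 : ℝ) ^ N)⁻¹ using 2 with n
  rw [pow_succ, pow_add]
  field_simp

lemma sharpnessTerm_nonneg (ht : 0 ≤ t) (j : ℕ) : 0 ≤ sharpnessTerm t j := by
  unfold sharpnessTerm
  positivity

lemma summable_sharpnessTerm (ht : 0 ≤ t) : Summable (sharpnessTerm t) :=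
  (hasSum_inv_two_pow_add_succ 0).summable.of_nonneg_of_le (sharpnessTerm_nonneg ht)
    fun j => mul_le_of_le_one_right (by positivity) (min_le_left _ _)

lemma tsum_sharpnessTerm_nat_add (ht : 0 ≤ t) (hlo : 1 ≤ t * 2 ^ 2 ^ (N + 1)) :
    ∑' n, sharpnessTerm t (n + N) = (2 ^ N)⁻¹ := by
  refine Eq.trans (tsum_congr fun n => ?_) (hasSum_inv_two_pow_add_succ N).tsum_eq
  have : t * 2 ^ 2 ^ (N + 1) ≤ t * 2 ^ 2 ^ (n + N + 1) := by
    gcongr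
    · norm_num
    · norm_num
    · omega
  rw [sharpnessTerm, min_eq_left (hlo.trans this), mul_one]

lemma sharpnessTerm_le (ht : 0 ≤ t) (hhi : t * 2 ^ 2 ^ N ≤ 1) {j : ℕ} (hj : j < N) :
    sharpnessTerm t j ≤ 2 ^ (j + 1) / (2 ^ N) ^ 2 := by
  have key : (2 : ℝ) ^ 2 ^ (j + 1) * (2 ^ N) ^ 2 ≤ 2 ^ 2 ^ N * (2 ^ (j + 1)) ^ 2 := by
    rw [← pow_mul, ← pow_mul, ← pow_add, ← pow_add]
    have := two_pow_succ_add_two_mul_le hj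
    exact pow_le_pow_right₀ one_le_two (by linarith)
  calc sharpnessTerm t j ≤ ((2 : ℝ) ^ (j + 1))⁻¹ * (t * 2 ^ 2 ^ (j + 1)) :=
        mul_le_mul_of_nonneg_left (min_le_right _ _) (by positivity)
    _ ≤ 2 ^ (j + 1) / (2 ^ N) ^ 2 := by
        rw [inv_mul_le_iff₀ (by positivity), ← mul_div_assoc, le_div_iff₀ (by positivity)]
        have : (0 : ℝ) ≤ (2 ^ (j + 1)) ^ 2 := by positivity
        nlinarith [mul_le_mul_of_nonneg_left key ht]

lemma sum_range_sharpnessTerm_le (ht : 0 ≤ t) (hhi : t * 2 ^ 2 ^ N ≤ 1) :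
    ∑ j ∈ range N, sharpnessTerm t j ≤ 2 * (2 ^ N)⁻¹ := by
  have hgeom : ∑ j ∈ range N, (2 : ℝ) ^ (j + 1) ≤ 2 * 2 ^ N := by
    simp only [pow_succ, ← sum_mul, geom_sum_eq (by norm_num : (2 : ℝ) ≠ 1)]
    norm_num
    linarith [pow_pos (by norm_num : (0 : ℝ) < 2) N]
  calc ∑ j ∈ range N, sharpnessTerm t j ≤ ∑ j ∈ range N, 2 ^ (j + 1) / ((2 : ℝ) ^ N) ^ 2 :=
        sum_le_sum fun j hj => sharpnessTerm_le ht hhi (mem_range.mp hj)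
    _ ≤ 2 * 2 ^ N / (2 ^ N) ^ 2 := by
        rw [← sum_div]
        gcongr
    _ = 2 * (2 ^ N)⁻¹ := by field_simp

lemma inv_two_pow_le_tsum_sharpnessTerm (ht : 0 ≤ t) (hlo : 1 ≤ t * 2 ^ 2 ^ (N + 1)) :
    (2 ^ N)⁻¹ ≤ ∑' j, sharpnessTerm t j := by
  rw [← (summable_sharpnessTerm ht).sum_add_tsum_nat_add N, tsum_sharpnessTerm_nat_add ht hlo]
  linarith [sum_nonneg fun j (_ : j ∈ range N) => sharpnessTerm_nonneg ht j]

lemma tsum_sharpnessTerm_le (ht : 0 ≤ t) (hhi : t * 2 ^ 2 ^ N ≤ 1)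
    (hlo : 1 ≤ t * 2 ^ 2 ^ (N + 1)) : ∑' j, sharpnessTerm t j ≤ 3 * (2 ^ N)⁻¹ := by
  rw [← (summable_sharpnessTerm ht).sum_add_tsum_nat_add N, tsum_sharpnessTerm_nat_add ht hlo]
  linarith [sum_range_sharpnessTerm_le ht hhi]

end SharpnessTerm

lemma integral_min_eq_tsum_sharpnessTerm (h : ℕ → Set ℝ) (hmeas : ∀ k, MeasurableSet (h k))
    (hsub : ∀ k, h k ⊆ Ioo (0:ℝ) 1) (hdisj : Pairwise (Disjoint on h))
    (hvol : ∀ k : ℕ, 1 ≤ k →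
      volume (h k) = ENNReal.ofReal ((2:ℝ) ^ (-(k:ℝ) - (2:ℝ) ^ (k:ℝ))))
    (x : ℝ → ℝ)
    (hx : ∀ s, x s =
      ∑' k : ℕ, (2:ℝ) ^ ((2:ℝ) ^ ((k:ℝ) + 1)) * (h (k + 1)).indicator (fun _ => (1:ℝ)) s)
    {t : ℝ} (ht : 0 ≤ t) :
    ∫ s in Ioo (0:ℝ) 1, min (x s) (t * x s ^ 2) = ∑' j, sharpnessTerm t j := by
  set A : ℕ → ℝ := fun j => 2 ^ 2 ^ (j + 1)
  have hA : ∀ k : ℕ, (2:ℝ) ^ ((2:ℝ) ^ ((k:ℝ) + 1)) = A k := fun k => by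
    simp only [A]
    norm_cast
  have hApos : ∀ j, 0 < A j := fun j => by positivity
  have hd : Pairwise (Disjoint on fun j => h (j + 1)) :=
    hdisj.comp_of_injective (add_left_injective 1)
  have hxA : ∀ j, ∀ s ∈ h (j + 1), x s = A j := fun j s hs => by
    rw [hx, ← tsum_mul_indicator_one_of_mem hd A hs]
    simp only [hA]
  have hx0 : ∀ s ∉ ⋃ j, h (j + 1), x s = 0 := fun s hs => by
    rw [mem_iUnion, not_exists] at hs
    simp [hx, indicator_of_notMem (hs _)]
  have hμ : ∀ j, (volume.restrict (Ioo (0:ℝ) 1)).real (h (j + 1))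
      = ((2:ℝ) ^ (j + 1))⁻¹ * (A j)⁻¹ := fun j => by
    rw [measureReal_def, Measure.restrict_eq_self _ (hsub _), hvol _ (by omega),
      ENNReal.toReal_ofReal (by positivity), Nat.cast_succ, rpow_sub two_pos, rpow_neg two_pos.le,
      hA, div_eq_mul_inv]
    norm_cast
  have hterm : ∀ j, min (A j) (t * A j ^ 2) * (volume.restrict (Ioo (0:ℝ) 1)).real (h (j + 1))
      = sharpnessTerm t j := fun j => by
    have : min (A j) (t * A j ^ 2) = A j * min 1 (t * A j) := by
      rw [mul_min_of_nonneg _ _ (hApos j).le]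
      ring_nf
    rw [hμ, this, sharpnessTerm]
    change _ = _ * min 1 (t * A j)
    field_simp [(hApos j).ne']
  have hc : ∀ j, 0 ≤ min (A j) (t * A j ^ 2) := fun j => le_min (hApos j).le (by positivity)
  refine ((hasSum_integral_of_eqOn_const (fun j => hmeas _) hd (fun j => measure_ne_top _ _)
    (fun j s hs => by simp only [hxA j s hs]) (fun s hs => by simp [hx0 s hs]) ?_).tsum_eq.symm.trans
    (tsum_congr hterm))
  simpa only [Real.norm_of_nonneg (hc _), hterm] using summable_sharpnessTerm ht

/-- Let `(h_k)_{k≥1}` be pairwise disjoint measurable subsets of `(0,1)` with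
`λ(h_k) = 2^{-k-2^k}`, and `x = ∑_{k≥1} 2^{2^k} χ_{h_k}`. Then for every `0 < t < 1/4`:
`1/log₂(1/t) ≤ ∫₀¹ min{x(s), t x(s)²} ds ≤ 6/log₂(1/t)`. -/
theorem sharpness_integral_x_explicit
    (h : ℕ → Set ℝ)
    (hmeas : ∀ k, MeasurableSet (h k))
    (hsub : ∀ k, h k ⊆ Ioo (0:ℝ) 1)
    (hdisj : Pairwise (Function.onFun Disjoint h))
    (hvol : ∀ k : ℕ, 1 ≤ k →
      volume (h k) = ENNReal.ofReal ((2:ℝ) ^ (-(k:ℝ) - (2:ℝ) ^ (k:ℝ))))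
    (x : ℝ → ℝ)
    (hx : ∀ s, x s =
      ∑' k : ℕ, (2:ℝ) ^ ((2:ℝ) ^ ((k:ℝ) + 1)) * (h (k + 1)).indicator (fun _ => (1:ℝ)) s) :
    ∀ t : ℝ, 0 < t → t < 1 / 4 →
      1 / Real.logb 2 (1 / t) ≤ (∫ s in Ioo (0:ℝ) 1, min (x s) (t * x s ^ 2)) ∧
        (∫ s in Ioo (0:ℝ) 1, min (x s) (t * x s ^ 2)) ≤ 6 / Real.logb 2 (1 / t) := by
  intro t ht ht4
  set L := logb 2 (1 / t)
  have hL : 1 ≤ L := by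
    have := (two_pow_le_logb_one_div_iff ht 0).2 (by norm_num; linarith)
    rwa [pow_zero] at this
  obtain ⟨N, hNL, hLN⟩ := exists_nat_pow_near hL one_lt_two
  have hhi : t * 2 ^ 2 ^ N ≤ 1 := (two_pow_le_logb_one_div_iff ht N).1 hNL
  have hlo : 1 ≤ t * 2 ^ 2 ^ (N + 1) :=
    not_lt.1 fun h => hLN.not_ge ((two_pow_le_logb_one_div_iff ht _).2 h.le)
  rw [integral_min_eq_tsum_sharpnessTerm h hmeas hsub hdisj hvol x hx ht.le]
  constructor
  · calc 1 / L ≤ (2 ^ N)⁻¹ := by rw [one_div]; exact inv_anti₀ (by positivity) hNL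
      _ ≤ _ := inv_two_pow_le_tsum_sharpnessTerm ht.le hlo
  · calc _ ≤ 3 * (2 ^ N)⁻¹ := tsum_sharpnessTerm_le ht.le hhi hlo
      _ = 6 / 2 ^ (N + 1) := by
        rw [pow_succ]
        field_simp
        norm_num
      _ ≤ 6 / L := div_le_div_of_nonneg_left (by norm_num) (by linarith) hLN.le
end
end

section
/- Let (h_k) and (g_k) be sequences of pairwise disjoint measurable subsets of (0,1) with λ(h_k) = 2^{−k−2^k} and λ(g_k) = 4^{−k−4^k} for k ≥ 1, and let x = ∑_{k≥1} 2^{2^k} χ_{h_k} and y = ∑_{k≥1} 4^{4^k} χ_{g_k}. Then there is no constant C > 0 such that n_x(C·τ) ≤ C·n_y(τ) for all τ > 0; in particular the distributions of x and y are not equivalent. -/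
/-!
The levels `4^{4^k} = 2^{2^{2k+1}}` of `y` are the odd-indexed levels of `x`, but the even-indexed
levels `2^{2^{2k}}` of `x` have no counterpart in `y`. Take `R = 4^{4^m} ≥ 2C` and `τ = R²/(2C)`.
On `h_{2m+2}` we have `x = R² > Cτ`, so `n_x(Cτ) ≥ 4^{-m-1} R^{-2}`; on the other hand `|y| > τ ≥ R`
only on the sets `g_k` with `k > m`, whose masses form a geometric tail bounded by
`(4/3) 4^{-m-1} R^{-4}`. The inequality `n_x(Cτ) ≤ C n_y(τ)` would then give `R² ≤ (4/3) C < R`.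
-/

open MeasureTheory Set

noncomputable section

/-- The distribution function `n_f` of a measurable function on `(0,1)`. -/
def distribFun (f : ℝ → ℝ) (τ : ℝ) : ℝ :=
  (volume {u ∈ Ioo (0:ℝ) 1 | τ < |f u|}).toReal

section IndicatorSeries

variable {α : Type*} {s : ℕ → Set α} {a : ℕ → ℝ} {u : α}

theorem tsum_mul_indicator_of_mem (hs : Pairwise (Function.onFun Disjoint s)) {m : ℕ}
    (hu : u ∈ s m) : ∑' k, a k * (s k).indicator (fun _ => (1:ℝ)) u = a m := by
  rw [tsum_eq_single m fun k hk => ?_, indicator_of_mem hu, mul_one]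
  rw [indicator_of_notMem fun huk => (hs hk).ne_of_mem huk hu rfl, mul_zero]

theorem setOf_lt_abs_tsum_mul_indicator_subset (hs : Pairwise (Function.onFun Disjoint s))
    {τ : ℝ} (hτ : 0 ≤ τ) :
    {u | τ < |∑' k, a k * (s k).indicator (fun _ => (1:ℝ)) u|} ⊆ ⋃ (k) (_ : τ < |a k|), s k := by
  intro u hu
  by_cases hmem : ∃ k, u ∈ s k
  · obtain ⟨k, hk⟩ := hmem
    rw [mem_ofPred_eq, tsum_mul_indicator_of_mem hs hk] at hu
    exact mem_biUnion hu hk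
  · push Not at hmem
    simp only [mem_ofPred_eq, hmem, not_false_eq_true, indicator_of_notMem, mul_zero, tsum_zero,
      abs_zero] at hu
    linarith

end IndicatorSeries

theorem measure_iUnion_le_of_le_geometric {α : Type*} [MeasurableSpace α] {μ : Measure α}
    {s : ℕ → Set α} {c r : ℝ} (hc : 0 ≤ c) (hr₀ : 0 ≤ r) (hr₁ : r < 1)
    (hs : ∀ k, μ (s k) ≤ ENNReal.ofReal (c * r ^ k)) :
    μ (⋃ k, s k) ≤ ENNReal.ofReal (c / (1 - r)) :=
  calc μ (⋃ k, s k) ≤ ∑' k, μ (s k) := measure_iUnion_le s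
    _ ≤ ∑' k, ENNReal.ofReal (c * r ^ k) := ENNReal.tsum_le_tsum hs
    _ = ENNReal.ofReal (c / (1 - r)) := by
      rw [← ENNReal.ofReal_tsum_of_nonneg (fun k => by positivity)
        ((summable_geometric_of_lt_one hr₀ hr₁).mul_left c), tsum_mul_left,
        tsum_geometric_of_lt_one hr₀ hr₁, div_eq_mul_inv]

theorem le_distribFun {f : ℝ → ℝ} {τ : ℝ} {A : Set ℝ} (hA : A ⊆ Ioo 0 1)
    (hAf : A ⊆ {u | τ < |f u|}) : (volume A).toReal ≤ distribFun f τ :=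
  ENNReal.toReal_mono ((measure_mono (sep_subset _ _)).trans_lt measure_Ioo_lt_top).ne
    (measure_mono fun _ hu => ⟨hA hu, hAf hu⟩)

theorem distribFun_le {f : ℝ → ℝ} {τ b : ℝ} {B : Set ℝ} (hb : 0 ≤ b)
    (hB : {u | τ < |f u|} ⊆ B) (hBb : volume B ≤ ENNReal.ofReal b) : distribFun f τ ≤ b :=
  ENNReal.toReal_le_of_le_ofReal hb ((measure_mono fun _ hu => hB hu.2).trans hBb)

section LacunaryStepFunction

variable {b : ℝ} {s : ℕ → Set ℝ} {f : ℝ → ℝ}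

theorem rpow_neg_sub_le_distribFun (hb : 0 ≤ b) (hsub : ∀ k, s k ⊆ Ioo (0:ℝ) 1)
    (hdisj : Pairwise (Function.onFun Disjoint s))
    (hvol : ∀ k : ℕ, 1 ≤ k → volume (s k) = ENNReal.ofReal (b ^ (-(k:ℝ) - b ^ (k:ℝ))))
    (hf : ∀ u, f u = ∑' k : ℕ, b ^ (b ^ ((k:ℝ) + 1)) * (s (k + 1)).indicator (fun _ => (1:ℝ)) u)
    {n : ℕ} {τ : ℝ} (hτ : τ < b ^ b ^ ((n:ℝ) + 1)) :
    b ^ (-((n:ℝ) + 1) - b ^ ((n:ℝ) + 1)) ≤ distribFun f τ := by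
  have hdisj' : Pairwise (Function.onFun Disjoint fun k => s (k + 1)) :=
    hdisj.comp_of_injective (add_left_injective 1)
  have hlevel : s (n + 1) ⊆ {u | τ < |f u|} := fun u hu => by
    rwa [mem_ofPred_eq, hf, tsum_mul_indicator_of_mem hdisj' (m := n) hu,
      abs_of_nonneg (Real.rpow_nonneg hb _)]
  have := le_distribFun (hsub _) hlevel
  rwa [hvol _ (Nat.le_add_left 1 n), ENNReal.toReal_ofReal (Real.rpow_nonneg hb _),
    Nat.cast_succ] at this

theorem distribFun_le_rpow_neg_sub_div (hb : 1 < b)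
    (hdisj : Pairwise (Function.onFun Disjoint s))
    (hvol : ∀ k : ℕ, 1 ≤ k → volume (s k) = ENNReal.ofReal (b ^ (-(k:ℝ) - b ^ (k:ℝ))))
    (hf : ∀ u, f u = ∑' k : ℕ, b ^ (b ^ ((k:ℝ) + 1)) * (s (k + 1)).indicator (fun _ => (1:ℝ)) u)
    {n : ℕ} {τ : ℝ} (hτ : b ^ b ^ (n:ℝ) ≤ τ) :
    distribFun f τ ≤ b ^ (-((n:ℝ) + 1) - b ^ ((n:ℝ) + 1)) / (1 - b⁻¹) := by
  have hdisj' : Pairwise (Function.onFun Disjoint fun k => s (k + 1)) :=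
    hdisj.comp_of_injective (add_left_injective 1)
  have hτ₀ : 0 ≤ τ := (Real.rpow_nonneg (by linarith) _).trans hτ
  have hlevel : {u | τ < |f u|} ⊆ ⋃ j, s (j + n + 1) := by
    intro u hu
    rw [mem_ofPred_eq, hf] at hu
    obtain ⟨k, hk, hu⟩ := mem_iUnion₂.mp (setOf_lt_abs_tsum_mul_indicator_subset hdisj' hτ₀ hu)
    have hnk : n ≤ k := by
      by_contra! hkn
      have hkn' : (k:ℝ) + 1 ≤ n := by exact_mod_cast hkn
      rw [abs_of_nonneg (Real.rpow_nonneg (by linarith) _)] at hk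
      have := Real.rpow_le_rpow_of_exponent_le hb.le
        (Real.rpow_le_rpow_of_exponent_le hb.le hkn')
      linarith
    exact mem_iUnion.mpr ⟨k - n, by rwa [Nat.sub_add_cancel hnk]⟩
  have hterm : ∀ j, volume (s (j + n + 1)) ≤
      ENNReal.ofReal (b ^ (-((n:ℝ) + 1) - b ^ ((n:ℝ) + 1)) * b⁻¹ ^ j) := by
    intro j
    rw [hvol _ (Nat.le_add_left 1 _)]
    refine ENNReal.ofReal_le_ofReal ?_
    rw [← Real.rpow_natCast, Real.inv_rpow (by linarith), ← Real.rpow_neg (by linarith),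
      ← Real.rpow_add (by linarith)]
    refine Real.rpow_le_rpow_of_exponent_le hb.le ?_
    have := Real.rpow_le_rpow_of_exponent_le hb.le
      (show (n:ℝ) + 1 ≤ (j + n + 1 : ℕ) by push_cast; linarith [(j.cast_nonneg : (0:ℝ) ≤ j)])
    push_cast at this ⊢
    linarith
  have hr₁ : b⁻¹ < 1 := inv_lt_one_of_one_lt₀ hb
  have hc : 0 ≤ b ^ (-((n:ℝ) + 1) - b ^ ((n:ℝ) + 1)) := Real.rpow_nonneg (by linarith) _
  exact distribFun_le (div_nonneg hc (sub_nonneg.mpr hr₁.le)) hlevel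
    (measure_iUnion_le_of_le_geometric hc (by positivity) hr₁ hterm)

end LacunaryStepFunction

theorem exists_le_rpow_rpow (c : ℝ) {b : ℝ} (hb : 1 < b) : ∃ m : ℕ, c ≤ b ^ b ^ (m:ℝ) := by
  obtain ⟨n, hn⟩ := pow_unbounded_of_one_lt c hb
  obtain ⟨m, hm⟩ := pow_unbounded_of_one_lt (n:ℝ) hb
  refine ⟨m, hn.le.trans ?_⟩
  rw [← Real.rpow_natCast, Real.rpow_natCast b m]
  exact Real.rpow_le_rpow_of_exponent_le hb.le hm.le

theorem two_rpow_two_mul (z : ℝ) : (2:ℝ) ^ (2 * z) = 4 ^ z := by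
  rw [Real.rpow_mul zero_le_two]
  norm_num

theorem two_rpow_four_rpow_add_one (m : ℕ) :
    (2:ℝ) ^ (4:ℝ) ^ ((m:ℝ) + 1) = ((4:ℝ) ^ (4:ℝ) ^ (m:ℝ)) ^ 2 := by
  rw [show (2:ℝ) = 4 ^ (2⁻¹:ℝ) by norm_num, ← Real.rpow_mul (by norm_num), ← Real.rpow_natCast,
    ← Real.rpow_mul (by norm_num), Real.rpow_add_one (by norm_num)]
  push_cast; ring_nf

theorem four_rpow_four_rpow_add_one (m : ℕ) :
    (4:ℝ) ^ (4:ℝ) ^ ((m:ℝ) + 1) = ((4:ℝ) ^ (4:ℝ) ^ (m:ℝ)) ^ 4 := by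
  rw [← Real.rpow_natCast, ← Real.rpow_mul (by norm_num), Real.rpow_add_one (by norm_num)]
  push_cast; ring_nf

theorem distributions_not_equivalent_general
    (h g : ℕ → Set ℝ)
    (hsub : ∀ k, h k ⊆ Ioo (0:ℝ) 1)
    (hdisj : Pairwise (Function.onFun Disjoint h))
    (gdisj : Pairwise (Function.onFun Disjoint g))
    (hvol : ∀ k : ℕ, 1 ≤ k →
      volume (h k) = ENNReal.ofReal ((2:ℝ) ^ (-(k:ℝ) - (2:ℝ) ^ (k:ℝ))))
    (gvol : ∀ k : ℕ, 1 ≤ k →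
      volume (g k) = ENNReal.ofReal ((4:ℝ) ^ (-(k:ℝ) - (4:ℝ) ^ (k:ℝ))))
    (x y : ℝ → ℝ)
    (hx : ∀ s, x s =
      ∑' k : ℕ, (2:ℝ) ^ ((2:ℝ) ^ ((k:ℝ) + 1)) * (h (k + 1)).indicator (fun _ => (1:ℝ)) s)
    (hy : ∀ s, y s =
      ∑' k : ℕ, (4:ℝ) ^ ((4:ℝ) ^ ((k:ℝ) + 1)) * (g (k + 1)).indicator (fun _ => (1:ℝ)) s) :
    ¬ ∃ C > (0:ℝ), ∀ τ : ℝ, 0 < τ → distribFun x (C * τ) ≤ C * distribFun y τ := by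
  rintro ⟨C, hC, H⟩
  obtain ⟨m, hm⟩ := exists_le_rpow_rpow (2 * C) (by norm_num : (1:ℝ) < 4)
  set R := (4:ℝ) ^ (4:ℝ) ^ (m:ℝ)
  set Q := (4:ℝ) ^ (-((m:ℝ) + 1))
  have hR : 1 ≤ R := Real.one_le_rpow (by norm_num) (by positivity)
  have hQ : 0 < Q := by positivity
  have hx_lower : Q / R ^ 2 ≤ distribFun x (C * (R ^ 2 / (2 * C))) := by
    have hn : ((2 * m + 1 : ℕ) : ℝ) + 1 = 2 * ((m:ℝ) + 1) := by push_cast; ring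
    have hlevel : C * (R ^ 2 / (2 * C)) < (2:ℝ) ^ (2:ℝ) ^ (((2 * m + 1 : ℕ) : ℝ) + 1) := by
      rw [hn, two_rpow_two_mul, two_rpow_four_rpow_add_one, mul_div_left_comm,
        div_mul_cancel_right₀ hC.ne', ← div_eq_mul_inv]
      exact half_lt_self (by positivity)
    have := rpow_neg_sub_le_distribFun zero_le_two hsub hdisj hvol hx hlevel
    rwa [hn, two_rpow_two_mul, Real.rpow_sub two_pos, ← mul_neg, two_rpow_two_mul,
      two_rpow_four_rpow_add_one] at this
  have hy_upper : distribFun y (R ^ 2 / (2 * C)) ≤ Q / R ^ 4 / (1 - 4⁻¹) := by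
    have := distribFun_le_rpow_neg_sub_div (by norm_num) gdisj gvol hy (n := m)
      (τ := R ^ 2 / (2 * C)) (by rw [le_div_iff₀ (by positivity)]; nlinarith)
    rwa [Real.rpow_sub (by norm_num), four_rpow_four_rpow_add_one] at this
  have := (hx_lower.trans (H _ (by positivity))).trans (mul_le_mul_of_nonneg_left hy_upper hC.le)
  -- `R ^ 2 ≤ (4/3) C ≤ (2/3) R` contradicts `1 ≤ R`
  rw [div_le_iff₀ (by positivity)] at this
  field_simp at this
  nlinarith

/-- The distributions of `x = ∑_{k≥1} 2^{2^k} χ_{h_k}` and `y = ∑_{k≥1} 4^{4^k} χ_{g_k}`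
(where `λ(h_k) = 2^{-k-2^k}`, `λ(g_k) = 4^{-k-4^k}`) are not equivalent: there is no `C > 0`
with `n_x(Cτ) ≤ C n_y(τ)` for all `τ > 0`. -/
theorem distributions_not_equivalent
    (h g : ℕ → Set ℝ)
    (hmeas : ∀ k, MeasurableSet (h k)) (gmeas : ∀ k, MeasurableSet (g k))
    (hsub : ∀ k, h k ⊆ Ioo (0:ℝ) 1) (gsub : ∀ k, g k ⊆ Ioo (0:ℝ) 1)
    (hdisj : Pairwise (Function.onFun Disjoint h))
    (gdisj : Pairwise (Function.onFun Disjoint g))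
    (hvol : ∀ k : ℕ, 1 ≤ k →
      volume (h k) = ENNReal.ofReal ((2:ℝ) ^ (-(k:ℝ) - (2:ℝ) ^ (k:ℝ))))
    (gvol : ∀ k : ℕ, 1 ≤ k →
      volume (g k) = ENNReal.ofReal ((4:ℝ) ^ (-(k:ℝ) - (4:ℝ) ^ (k:ℝ))))
    (x y : ℝ → ℝ)
    (hx : ∀ s, x s =
      ∑' k : ℕ, (2:ℝ) ^ ((2:ℝ) ^ ((k:ℝ) + 1)) * (h (k + 1)).indicator (fun _ => (1:ℝ)) s)
    (hy : ∀ s, y s =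
      ∑' k : ℕ, (4:ℝ) ^ ((4:ℝ) ^ ((k:ℝ) + 1)) * (g (k + 1)).indicator (fun _ => (1:ℝ)) s) :
    ¬ ∃ C > (0:ℝ), ∀ τ : ℝ, 0 < τ → distribFun x (C * τ) ≤ C * distribFun y τ :=
  distributions_not_equivalent_general h g hsub hdisj gdisj hvol gvol x y hx hy
end
end
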